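/- Let ρ be a qubit density matrix with Bloch vector r = (r_x, r_y, r_z) ∈ ℝ³, |r|² ≤ 1, with |r_y| < 1. Then for every real qubit density matrix σ (a 2×2 positive semidefinite matrix of trace 1 with σ = σ*), one has F(ρ,σ)² ≤ (1 + √(1 − r_y²))/2, and the maximum is attained at the real state σ⋆ = (1/2)·[[1 + z₀, x₀], [x₀, 1 − z₀]] with x₀ = r_x/√(1 − r_y²) and z₀ = r_z/√(1 − r_y²); that is, F(ρ, σ⋆)² = (1 + √(1 − r_y²))/2. -/

import Mathlib

open Matrix Complex ComplexOrder Classical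

open scoped MatrixOrder in
/-- The positive semidefinite square root of a matrix (junk value `0` if not PSD). -/
noncomputable def psqrt {n : Type*} [Fintype n] [DecidableEq n] (A : Matrix n n ℂ) :
    Matrix n n ℂ :=
  if h : A.PosSemidef then CFC.sqrt A else 0

/-- Entrywise complex conjugate of a matrix. -/
def mconj {m n : Type*} (A : Matrix m n ℂ) : Matrix m n ℂ := A.map (starRingEnd ℂ)

/-- Fidelity `F(ρ,σ) = Tr √(√ρ σ √ρ)`. -/
noncomputable def fidelity {n : Type*} [Fintype n] [DecidableEq n] (ρ σ : Matrix n n ℂ) : ℝ :=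
  ((psqrt (psqrt ρ * σ * psqrt ρ)).trace).re

/-- The real part state `Re(ρ) = (ρ + ρ*)/2`. -/
noncomputable def reState {n : Type*} (ρ : Matrix n n ℂ) : Matrix n n ℂ :=
  ((1 : ℂ)/2) • (ρ + mconj ρ)

/-- The imaginarity measure `M_Re(ρ) = 1 - F(ρ, Re(ρ))`. -/
noncomputable def MRe {n : Type*} [Fintype n] [DecidableEq n] (ρ : Matrix n n ℂ) : ℝ :=
  1 - fidelity ρ (reState ρ)

/-- A density matrix: positive semidefinite with trace 1. -/
def IsDensityMatrix {n : Type*} [Fintype n] (ρ : Matrix n n ℂ) : Prop :=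
  ρ.PosSemidef ∧ ρ.trace = 1

/-! For a positive semidefinite 2×2 matrix `M`, Cayley–Hamilton gives
`(M + √(det M))² = (tr M + 2√(det M)) M`, hence `Tr √M = √(tr M + 2√(det M))`. Applied to
`√ρ σ √ρ` this yields `F(ρ,σ)² = Tr(ρσ) + 2√(det ρ · det σ)`, which for Bloch vectors `r`, `s`
reads `(1 + r·s + √(1 - |r|²) √(1 - |s|²)) / 2`. A real state has `s = (x, 0, z)`, and
Cauchy–Schwarz for `(r_x, r_z, √(1 - |r|²))` and `(x, z, √(1 - x² - z²))`, of squared norms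
`1 - r_y²` and `1`, bounds the bracket by `1 + √(1 - r_y²)`, with equality when the two vectors are
parallel, i.e. at `σ⋆`. -/

lemma mul_self_fin_two {R : Type*} [CommRing R] (A : Matrix (Fin 2) (Fin 2) R) :
    A * A = A.trace • A - A.det • 1 := by
  ext i j
  fin_cases i <;> fin_cases j <;>
    simp [Matrix.mul_apply, Fin.sum_univ_two, Matrix.trace_fin_two, Matrix.det_fin_two] <;> ring

namespace Matrix.PosSemidef

variable {n : Type*} [Fintype n] {M : Matrix n n ℂ}

lemma re_trace_nonneg (hM : M.PosSemidef) : 0 ≤ M.trace.re :=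
  (Complex.nonneg_iff.mp hM.trace_nonneg).1

lemma im_trace_eq_zero (hM : M.PosSemidef) : M.trace.im = 0 :=
  (Complex.nonneg_iff.mp hM.trace_nonneg).2.symm

lemma trace_eq_re (hM : M.PosSemidef) : M.trace = M.trace.re :=
  Complex.ext rfl hM.im_trace_eq_zero

variable [DecidableEq n]

lemma re_det_nonneg (hM : M.PosSemidef) : 0 ≤ M.det.re :=
  (Complex.nonneg_iff.mp hM.det_nonneg).1

lemma im_det_eq_zero (hM : M.PosSemidef) : M.det.im = 0 :=
  (Complex.nonneg_iff.mp hM.det_nonneg).2.symm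

lemma det_eq_re (hM : M.PosSemidef) : M.det = M.det.re :=
  Complex.ext rfl hM.im_det_eq_zero

end Matrix.PosSemidef

open scoped MatrixOrder in
lemma cfcSqrt_fin_two {M : Matrix (Fin 2) (Fin 2) ℂ} (hM : M.PosSemidef) :
    CFC.sqrt M =
      (((√(M.trace.re + 2 * √M.det.re))⁻¹ : ℝ) : ℂ) • (M + ((√M.det.re : ℝ) : ℂ) • 1) := by
  by_cases hM0 : M = 0
  · subst hM0; simp [CFC.sqrt_zero]
  set δ := √M.det.re
  set c := √(M.trace.re + 2 * δ)
  have ht : 0 < M.trace.re := hM.re_trace_nonneg.lt_of_ne fun h =>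
    hM0 (hM.trace_eq_zero_iff.mp (by rw [hM.trace_eq_re, ← h, ofReal_zero]))
  have hc : c ^ 2 = M.trace.re + 2 * δ := Real.sq_sqrt (by positivity)
  have hc0 : c ≠ 0 := by positivity
  have hdet : M.det = (δ : ℂ) ^ 2 := by
    rw [hM.det_eq_re, ← ofReal_pow, Real.sq_sqrt hM.re_det_nonneg]
  refine CFC.sqrt_unique ?_ ?_
  · have hsq : (M + (δ : ℂ) • 1) * (M + (δ : ℂ) • 1) = ((c : ℂ) ^ 2) • M := by
      have hc' : (c : ℂ) ^ 2 = M.trace + 2 * δ := by rw [hM.trace_eq_re]; exact_mod_cast hc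
      simp only [Matrix.add_mul, Matrix.mul_add, Matrix.smul_mul, Matrix.mul_smul,
        Matrix.mul_one, Matrix.one_mul, mul_self_fin_two M, hdet, hc']
      module
    rw [smul_mul_smul_comm, hsq, smul_smul, ofReal_inv]
    field_simp
    simp
  · exact ((hM.add (PosSemidef.one.smul (zero_le_real.mpr (Real.sqrt_nonneg _)))).smul
      (zero_le_real.mpr (by positivity))).nonneg

lemma trace_psqrt_fin_two {M : Matrix (Fin 2) (Fin 2) ℂ} (hM : M.PosSemidef) :
    (psqrt M).trace = (√(M.trace.re + 2 * √M.det.re) : ℝ) := by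
  have hc : (√(M.trace.re + 2 * √M.det.re))⁻¹ * (M.trace.re + 2 * √M.det.re)
      = √(M.trace.re + 2 * √M.det.re) := by
    rw [inv_mul_eq_div, Real.div_sqrt]
  rw [psqrt, dif_pos hM, cfcSqrt_fin_two hM, trace_smul, trace_add, trace_smul, trace_one]
  apply Complex.ext <;> simp [hM.im_trace_eq_zero]
  linear_combination hc

open scoped MatrixOrder in
lemma fidelity_sq_fin_two {ρ σ : Matrix (Fin 2) (Fin 2) ℂ} (hρ : ρ.PosSemidef)
    (hσ : σ.PosSemidef) :
    fidelity ρ σ ^ 2 = (ρ * σ).trace.re + 2 * √(ρ.det.re * σ.det.re) := by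
  have hS : psqrt ρ * psqrt ρ = ρ := by
    rw [psqrt, dif_pos hρ]; exact CFC.sqrt_mul_sqrt_self ρ hρ.nonneg
  have hSh : (psqrt ρ)ᴴ = psqrt ρ := by
    rw [psqrt, dif_pos hρ]; exact (CFC.sqrt_nonneg ρ).posSemidef.1
  have hpsd : (psqrt ρ * σ * psqrt ρ).PosSemidef := by
    simpa [hSh] using hσ.conjTranspose_mul_mul_same (psqrt ρ)
  have htr : (psqrt ρ * σ * psqrt ρ).trace = (ρ * σ).trace := by
    rw [trace_mul_comm, ← Matrix.mul_assoc, hS, trace_mul_comm]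
  have hdet : (psqrt ρ * σ * psqrt ρ).det.re = ρ.det.re * σ.det.re := by
    rw [det_mul, det_mul, mul_right_comm, ← det_mul, hS, mul_re, hρ.im_det_eq_zero, zero_mul,
      sub_zero]
  rw [fidelity, trace_psqrt_fin_two hpsd, ofReal_re,
    Real.sq_sqrt (by positivity [hpsd.re_trace_nonneg]), htr, hdet]

lemma Matrix.IsHermitian.posSemidef_of_re_trace_nonneg_of_re_det_nonneg
    {M : Matrix (Fin 2) (Fin 2) ℂ} (hM : M.IsHermitian) (htr : 0 ≤ M.trace.re)
    (hdet : 0 ≤ M.det.re) : M.PosSemidef := by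
  have hsum : M.trace.re = hM.eigenvalues 0 + hM.eigenvalues 1 := by
    simp [hM.trace_eq_sum_eigenvalues, Fin.sum_univ_two]
  have hprod : M.det.re = hM.eigenvalues 0 * hM.eigenvalues 1 := by
    simp [hM.det_eq_prod_eigenvalues, Fin.prod_univ_two, ← ofReal_mul]
  rw [hM.posSemidef_iff_eigenvalues_nonneg, Pi.le_def]
  intro i
  fin_cases i <;> simp <;> nlinarith

noncomputable def blochState (x y z : ℝ) : Matrix (Fin 2) (Fin 2) ℂ :=
  ((1:ℂ)/2) • !![1 + (z:ℂ), (x:ℂ) - Complex.I * (y:ℂ); (x:ℂ) + Complex.I * (y:ℂ), 1 - (z:ℂ)]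

section Bloch

variable (x y z x' y' z' : ℝ)

lemma blochState_isHermitian : (blochState x y z).IsHermitian := by
  ext i j
  fin_cases i <;> fin_cases j <;> simp [blochState, Complex.ext_iff]

lemma re_trace_blochState : (blochState x y z).trace.re = 1 := by
  simp [blochState, trace_fin_two]; ring

lemma re_det_blochState : (blochState x y z).det.re = (1 - (x ^ 2 + y ^ 2 + z ^ 2)) / 4 := by
  simp [blochState, det_fin_two]; ring

lemma re_trace_blochState_mul :
    (blochState x y z * blochState x' y' z').trace.re = (1 + (x * x' + y * y' + z * z')) / 2 := by
  simp [blochState, trace_fin_two]; ring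

lemma blochState_zero_y :
    blochState x 0 z = ((1:ℂ)/2) • !![1 + (z:ℂ), (x:ℂ); (x:ℂ), 1 - (z:ℂ)] := by
  simp [blochState]

lemma mconj_blochState : mconj (blochState x y z) = blochState x (-y) z := by
  ext i j
  fin_cases i <;> fin_cases j <;> simp [blochState, mconj, Complex.ext_iff]

variable {x y z x' y' z'}

lemma blochState_posSemidef (h : x ^ 2 + y ^ 2 + z ^ 2 ≤ 1) : (blochState x y z).PosSemidef :=
  (blochState_isHermitian x y z).posSemidef_of_re_trace_nonneg_of_re_det_nonneg
    (by rw [re_trace_blochState]; norm_num) (by rw [re_det_blochState]; linarith)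

lemma fidelity_blochState_sq (h : x ^ 2 + y ^ 2 + z ^ 2 ≤ 1)
    (h' : x' ^ 2 + y' ^ 2 + z' ^ 2 ≤ 1) :
    fidelity (blochState x y z) (blochState x' y' z') ^ 2 =
      (1 + (x * x' + y * y' + z * z')
        + √(1 - (x ^ 2 + y ^ 2 + z ^ 2)) * √(1 - (x' ^ 2 + y' ^ 2 + z' ^ 2))) / 2 := by
  rw [fidelity_sq_fin_two (blochState_posSemidef h) (blochState_posSemidef h'),
    re_trace_blochState_mul, re_det_blochState, re_det_blochState, div_mul_div_comm,
    Real.sqrt_div' _ (by norm_num), Real.sqrt_mul (by linarith),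
    show (4 * 4 : ℝ) = 4 ^ 2 by norm_num, Real.sqrt_sq (by norm_num)]
  ring

end Bloch

lemma exists_blochState_of_isDensityMatrix {σ : Matrix (Fin 2) (Fin 2) ℂ}
    (hσ : IsDensityMatrix σ) :
    ∃ x y z : ℝ, x ^ 2 + y ^ 2 + z ^ 2 ≤ 1 ∧ σ = blochState x y z := by
  obtain ⟨hpsd, htr⟩ := hσ
  have h00 : (σ 0 0).im = 0 := by simpa using (congrArg im (hpsd.1.coe_re_apply_self 0)).symm
  have h11 : (σ 1 1).im = 0 := by simpa using (congrArg im (hpsd.1.coe_re_apply_self 1)).symm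
  have h10 : σ 1 0 = starRingEnd ℂ (σ 0 1) := by simpa using (hpsd.1.apply 1 0).symm
  have hre : (σ 0 0).re + (σ 1 1).re = 1 := by simpa [trace_fin_two] using congrArg re htr
  have hσ : σ = blochState (2 * (σ 0 1).re) (-2 * (σ 0 1).im) ((σ 0 0).re - (σ 1 1).re) := by
    ext i j
    fin_cases i <;> fin_cases j <;> simp [blochState, Complex.ext_iff, h00, h11, h10] <;> linarith
  refine ⟨_, _, _, ?_, hσ⟩
  have hdet := hpsd.re_det_nonneg
  rw [hσ, re_det_blochState] at hdet
  linarith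

lemma exists_blochState_of_isDensityMatrix_of_eq_mconj {σ : Matrix (Fin 2) (Fin 2) ℂ}
    (hσ : IsDensityMatrix σ) (hreal : σ = mconj σ) :
    ∃ x z : ℝ, x ^ 2 + z ^ 2 ≤ 1 ∧ σ = blochState x 0 z := by
  obtain ⟨x, y, z, h, rfl⟩ := exists_blochState_of_isDensityMatrix hσ
  have hy : y = 0 := by
    rw [mconj_blochState] at hreal
    have := congrArg (fun M => (M 1 0).im) hreal
    simp [blochState] at this
    linarith
  subst hy
  exact ⟨x, z, by linarith, rfl⟩

lemma bloch_overlap_le {rx ry rz x z : ℝ} (hr : rx ^ 2 + ry ^ 2 + rz ^ 2 ≤ 1)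
    (h : x ^ 2 + z ^ 2 ≤ 1) :
    rx * x + rz * z + √(1 - (rx ^ 2 + ry ^ 2 + rz ^ 2)) * √(1 - (x ^ 2 + z ^ 2))
      ≤ √(1 - ry ^ 2) := by
  apply Real.le_sqrt_of_sq_le
  set a := √(1 - (rx ^ 2 + ry ^ 2 + rz ^ 2))
  set b := √(1 - (x ^ 2 + z ^ 2))
  have ha : a ^ 2 = 1 - (rx ^ 2 + ry ^ 2 + rz ^ 2) := Real.sq_sqrt (by linarith)
  have hb : b ^ 2 = 1 - (x ^ 2 + z ^ 2) := Real.sq_sqrt (by linarith)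
  nlinarith [sq_nonneg (rx * z - rz * x), sq_nonneg (rx * b - a * x), sq_nonneg (rz * b - a * z)]

lemma one_sub_sq_div_sqrt_add_sq_div_sqrt {rx ry rz : ℝ} (hy : ry ^ 2 < 1) :
    1 - ((rx / √(1 - ry ^ 2)) ^ 2 + (rz / √(1 - ry ^ 2)) ^ 2)
      = (1 - (rx ^ 2 + ry ^ 2 + rz ^ 2)) / (1 - ry ^ 2) := by
  have h : 1 - ry ^ 2 ≠ 0 := by linarith
  rw [div_pow, div_pow, Real.sq_sqrt (by linarith)]
  field_simp
  ring

lemma bloch_overlap_eq {rx ry rz : ℝ} (hr : rx ^ 2 + ry ^ 2 + rz ^ 2 ≤ 1) (hy : ry ^ 2 < 1) :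
    rx * (rx / √(1 - ry ^ 2)) + rz * (rz / √(1 - ry ^ 2))
      + √(1 - (rx ^ 2 + ry ^ 2 + rz ^ 2)) * √(1 - ((rx / √(1 - ry ^ 2)) ^ 2 + (rz / √(1 - ry ^ 2)) ^ 2))
      = √(1 - ry ^ 2) := by
  rw [one_sub_sq_div_sqrt_add_sq_div_sqrt hy, ← Real.sq_sqrt (by linarith : 0 ≤ 1 - ry ^ 2),
    Real.sqrt_div' _ (sq_nonneg _), Real.sqrt_sq (Real.sqrt_nonneg _)]
  set s := √(1 - ry ^ 2)
  have hs : s ^ 2 = 1 - ry ^ 2 := Real.sq_sqrt (by linarith)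
  have hs0 : 0 < s := Real.sqrt_pos.mpr (by linarith)
  field_simp
  rw [Real.sq_sqrt (by linarith)]
  linarith

theorem stmt12 (rx ry rz : ℝ) (hr : rx ^ 2 + ry ^ 2 + rz ^ 2 ≤ 1) (hy : |ry| < 1) :
    (∀ σ : Matrix (Fin 2) (Fin 2) ℂ, IsDensityMatrix σ → σ = mconj σ →
      fidelity (((1:ℂ)/2) • !![1 + (rz:ℂ), (rx:ℂ) - Complex.I * (ry:ℂ); (rx:ℂ) + Complex.I * (ry:ℂ), 1 - (rz:ℂ)] : Matrix (Fin 2) (Fin 2) ℂ) σ ^ 2 ≤ (1 + Real.sqrt (1 - ry ^ 2)) / 2) ∧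
    fidelity (((1:ℂ)/2) • !![1 + (rz:ℂ), (rx:ℂ) - Complex.I * (ry:ℂ); (rx:ℂ) + Complex.I * (ry:ℂ), 1 - (rz:ℂ)] : Matrix (Fin 2) (Fin 2) ℂ)
      (((1:ℂ)/2) • !![1 + ((rz / Real.sqrt (1 - ry ^ 2) : ℝ) : ℂ), ((rx / Real.sqrt (1 - ry ^ 2) : ℝ) : ℂ); ((rx / Real.sqrt (1 - ry ^ 2) : ℝ) : ℂ), 1 - ((rz / Real.sqrt (1 - ry ^ 2) : ℝ) : ℂ)] : Matrix (Fin 2) (Fin 2) ℂ) ^ 2 = (1 + Real.sqrt (1 - ry ^ 2)) / 2 := by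
  change (∀ σ, _ → _ → fidelity (blochState rx ry rz) σ ^ 2 ≤ _) ∧
    fidelity (blochState rx ry rz) _ ^ 2 = _
  have hy2 : ry ^ 2 < 1 := (sq_lt_one_iff_abs_lt_one ry).mpr hy
  set s := √(1 - ry ^ 2)
  have hσstar : (rx / s) ^ 2 + 0 ^ 2 + (rz / s) ^ 2 ≤ 1 := by
    have hrest := one_sub_sq_div_sqrt_add_sq_div_sqrt (rx := rx) (rz := rz) hy2
    have : 0 ≤ (1 - (rx ^ 2 + ry ^ 2 + rz ^ 2)) / (1 - ry ^ 2) :=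
      div_nonneg (by linarith) (by linarith)
    simp only [zero_pow two_ne_zero, add_zero]
    linarith
  refine ⟨fun σ hσ hreal => ?_, ?_⟩
  · obtain ⟨x, z, hxz, rfl⟩ := exists_blochState_of_isDensityMatrix_of_eq_mconj hσ hreal
    rw [fidelity_blochState_sq hr (by linarith)]
    simp only [mul_zero, add_zero, zero_pow two_ne_zero]
    linarith [bloch_overlap_le (ry := ry) hr hxz]
  · rw [← blochState_zero_y, fidelity_blochState_sq hr hσstar]
    simp only [mul_zero, add_zero, zero_pow two_ne_zero]
    linarith [bloch_overlap_eq hr hy2]
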